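/- arXiv:math/0403167 — 2 statements merged into one kernel-verified Lean document; each statement's English description precedes it below -/
import Mathlib

section
/- The sequences α_n and β_n defined by α_0 = 1, α_n = (−1)^n q^{n²} (q^n + q^{−n}) for n > 0, and β_n = q^n / (q²;q²)_n form a Bailey pair relative to 1, i.e. β_n = ∑_{i=0}^n α_i / ((q;q)_{n-i} (q;q)_{n+i}) for all n ≥ 0. -/
open scoped BigOperators

/-- Finite q-Pochhammer symbol `(a;q)_n`. -/
noncomputable def qPoch (a q : ℂ) (n : ℕ) : ℂ := ∏ j ∈ Finset.range n, (1 - a * q ^ j)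

/-- Infinite q-Pochhammer symbol `(a;q)_∞`. -/
noncomputable def qPochInf (a q : ℂ) : ℂ := ∏' j : ℕ, (1 - a * q ^ j)

lemma qPoch_succ (a q : ℂ) (n : ℕ) : qPoch a q (n+1) = qPoch a q n * (1 - a * q ^ n) :=
  Finset.prod_range_succ _ _
lemma qPoch_zero (a q : ℂ) : qPoch a q 0 = 1 := rfl

noncomputable def myA (q : ℂ) (i : ℕ) : ℂ :=
  if i = 0 then 1 else (-1 : ℂ) ^ i * q ^ (i ^ 2) * (q ^ i + q ^ (-(i : ℤ)))
noncomputable def myF (q : ℂ) (n i : ℕ) : ℂ := myA q i / (qPoch q q (n - i) * qPoch q q (n + i))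
noncomputable def myS (q : ℂ) (n : ℕ) : ℂ := ∑ i ∈ Finset.range (n+1), myF q n i
noncomputable def myR (q u x : ℂ) : ℂ :=
  (1 - q + q^2*u*(x + x⁻¹) - q^2*u^2*x^2 - q^3*u^2) / ((1 + x^2) * (q^2*u^2 - 1))
noncomputable def myG (q : ℂ) (n k : ℕ) : ℂ :=
  if k = 0 then 0 else if k = n+1 then -myF q (n+1) (n+1)
  else if n+1 < k then 0 else myF q (n+1) k * myR q (q^n) (q^k)

set_option linter.unusedSectionVars false
set_option linter.unusedVariables false

section lems
variable {q : ℂ} (h0 : 0 < ‖q‖) (h1 : ‖q‖ < 1)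
include h0 h1

lemma hq : q ≠ 0 := by
  intro h; rw [h] at h0; simp at h0

lemma habs (m : ℕ) : ‖q ^ (m+1)‖ < 1 := by
  rw [norm_pow]
  exact pow_lt_one₀ (norm_nonneg q) h1 (Nat.succ_ne_zero m)

lemma hsub (m : ℕ) : (1 : ℂ) - q ^ (m+1) ≠ 0 := by
  intro h
  have h2 : q ^ (m+1) = 1 := by linear_combination -h
  have h3 := habs h0 h1 m
  rw [h2] at h3; simp at h3

lemma hadd (m : ℕ) : (1 : ℂ) + q ^ (m+1) ≠ 0 := by
  intro h
  have h2 : q ^ (m+1) = -1 := by linear_combination h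
  have h3 := habs h0 h1 m
  rw [h2] at h3; simp at h3

lemma hP (m : ℕ) : qPoch q q m ≠ 0 := by
  unfold qPoch
  refine Finset.prod_ne_zero_iff.2 fun j _ => ?_
  have := hsub h0 h1 j
  rwa [pow_succ'] at this

lemma hP2 (m : ℕ) : qPoch (q^2) (q^2) m ≠ 0 := by
  unfold qPoch
  refine Finset.prod_ne_zero_iff.2 fun j _ => ?_
  have := hsub h0 h1 (2*j+1)
  intro h; apply this
  rw [← h]; ring_nf

end lems

lemma case1 (q : ℂ) (hq : q ≠ 0) (hs : ∀ M : ℕ, (1:ℂ) - q * q^M ≠ 0) :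
    myF q (0+1) 0 - q / (1 - q^(2*0+2)) * myF q 0 0
      = myG q 0 (0+1) - myG q 0 0 := by
  have g1 : myG q 0 1 = -myF q 1 1 := by unfold myG; rw [if_neg (by omega), if_pos rfl]
  have g0 : myG q 0 0 = 0 := by unfold myG; rw [if_pos rfl]
  rw [g1, g0, sub_zero]
  simp only [myF, myA, qPoch_succ, qPoch_zero, if_pos rfl, if_neg (Nat.one_ne_zero)]
  norm_num
  simp only [qPoch_zero]
  have h1 : (1:ℂ) - q ≠ 0 := by have := hs 0; rwa [pow_zero, mul_one] at this
  have h2 : (1:ℂ) - q^2 ≠ 0 := by have := hs 1; rwa [show q*q^1 = q^2 by ring] at this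
  rw [show q*q = q^2 by ring]
  field_simp
  ring

lemma case2 (q : ℂ) (n : ℕ) (hn : 1 ≤ n) (hq : q ≠ 0) (hs : ∀ M : ℕ, (1:ℂ) - q * q^M ≠ 0)
    (ha : ∀ M : ℕ, (1:ℂ) + q^(M+1) ≠ 0) (hA : qPoch q q n ≠ 0) :
    myF q (n+1) 0 - q / (1 - q^(2*n+2)) * myF q n 0
      = myG q n (0+1) - myG q n 0 := by
  have g1 : myG q n 1 = myF q (n+1) 1 * myR q (q^n) (q^1) := by
    unfold myG; rw [if_neg (by omega), if_neg (by omega), if_neg (by omega)]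
  have g0 : myG q n 0 = 0 := by unfold myG; rw [if_pos rfl]
  rw [g1, g0, sub_zero]
  simp only [myF, myA, myR, Nat.sub_zero, Nat.add_sub_cancel, Nat.add_zero, reduceIte, if_neg Nat.one_ne_zero,
    zpow_neg, zpow_natCast, Nat.cast_one, pow_one]
  have e1 : qPoch q q (n+1) = qPoch q q n * (1 - q * q^n) := qPoch_succ _ _ _
  have e2 : qPoch q q (n+1+1) = qPoch q q n * (1 - q * q^n) * (1 - q * q^(n+1)) := by
    rw [qPoch_succ, e1]
  rw [e1, e2]
  have h1 : (1:ℂ) - q * q^n ≠ 0 := hs n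
  have h2 : (1:ℂ) - q * q^(n+1) ≠ 0 := hs (n+1)
  have h3 : (1:ℂ) - q^(2*n+2) ≠ 0 := by
    have := hs (2*n+1); rwa [show q * q^(2*n+1) = q^(2*n+2) by ring] at this
  have h4 : (1:ℂ) + q^2 ≠ 0 := by
    have := ha 1; rwa [show (1:ℕ)+1 = 2 from rfl] at this
  have h5 : q^2 * (q^n)^2 - 1 ≠ 0 := by
    have := hs (2*n+1)
    intro h; apply this; linear_combination -h
  rw [div_mul_div_comm, div_mul_div_comm,
    div_sub_div _ _ (mul_ne_zero (mul_ne_zero hA h1) (mul_ne_zero hA h1))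
      (mul_ne_zero h3 (mul_ne_zero hA hA)),
    div_eq_div_iff
      (mul_ne_zero (mul_ne_zero (mul_ne_zero hA h1) (mul_ne_zero hA h1)) (mul_ne_zero h3 (mul_ne_zero hA hA)))
      (mul_ne_zero (mul_ne_zero hA (mul_ne_zero (mul_ne_zero hA h1) h2)) (mul_ne_zero h4 h5))]
  field_simp
  ring

lemma case3 (q : ℂ) (j : ℕ) (hq : q ≠ 0) (hs : ∀ M : ℕ, (1:ℂ) - q * q^M ≠ 0)
    (ha : ∀ M : ℕ, (1:ℂ) + q^(M+1) ≠ 0) (hB : qPoch q q (2*j+2) ≠ 0) :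
    myF q (j+1+1) (j+1) - q / (1 - q^(2*(j+1)+2)) * myF q (j+1) (j+1)
      = myG q (j+1) (j+1+1) - myG q (j+1) (j+1) := by
  have g1 : myG q (j+1) (j+1+1) = -myF q (j+1+1) (j+1+1) := by
    unfold myG; rw [if_neg (by omega), if_pos rfl]
  have g2 : myG q (j+1) (j+1) = myF q (j+1+1) (j+1) * myR q (q^(j+1)) (q^(j+1)) := by
    unfold myG; rw [if_neg (by omega), if_neg (by omega), if_neg (by omega)]
  rw [g1, g2]
  simp only [myF, myA, myR, if_neg (Nat.succ_ne_zero j), if_neg (Nat.succ_ne_zero (j+1)),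
    zpow_neg, zpow_natCast,
    show j+1+1 - (j+1) = 1 from by omega, show j+1+1 + (j+1) = 2*j+3 from by omega,
    show j+1 - (j+1) = 0 from by omega, show j+1 + (j+1) = 2*j+2 from by omega,
    show j+1+1 - (j+1+1) = 0 from by omega, show j+1+1 + (j+1+1) = 2*j+4 from by omega]
  have e0 : qPoch q q 1 = 1 - q := by
    rw [qPoch_succ, qPoch_zero, one_mul, pow_zero, mul_one]
  have e1 : qPoch q q (2*j+3) = qPoch q q (2*j+2) * (1 - q*q^(2*j+2)) := qPoch_succ _ _ _
  have e2 : qPoch q q (2*j+4) = qPoch q q (2*j+2) * (1 - q*q^(2*j+2)) * (1 - q*q^(2*j+3)) := by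
    rw [show 2*j+4 = (2*j+3)+1 from rfl, qPoch_succ, e1]
  rw [e0, e1, e2, qPoch_zero]
  have hq1 : (1:ℂ) - q ≠ 0 := by have := hs 0; rwa [pow_zero, mul_one] at this
  have d4 : (1:ℂ) + (q^(j+1))^2 ≠ 0 := by
    have := ha (2*j+1); rwa [show q^(2*j+1+1) = (q^(j+1))^2 from by ring] at this
  have d5 : q^2*(q^(j+1))^2 - 1 ≠ 0 := by
    have := hs (2*j+3); intro h; apply this; linear_combination -h
  have d1 : (1:ℂ) - q*(q^(j+1))^2 ≠ 0 := by
    have := hs (2*j+2); rwa [show (q:ℂ)*q^(2*j+2) = q*(q^(j+1))^2 from by ring] at this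
  have d2 : (1:ℂ) - q^2*(q^(j+1))^2 ≠ 0 := by
    have := hs (2*j+3); rwa [show (q:ℂ)*q^(2*j+3) = q^2*(q^(j+1))^2 from by ring] at this
  rw [show ((-1:ℂ))^(j+1+1) * q^((j+1+1)^2) = (-1)^(j+1)*q^((j+1)^2) * (-(q*(q^(j+1))^2)) from by ring,
      show (q:ℂ)^(j+1+1) = q*q^(j+1) from by ring,
      show (q:ℂ)*q^(2*j+2) = q*(q^(j+1))^2 from by ring,
      show (q:ℂ)*q^(2*j+3) = q^2*(q^(j+1))^2 from by ring,
      show (q:ℂ)^(2*(j+1)+2) = q^2*(q^(j+1))^2 from by ring]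
  have hX : (q:ℂ)^(j+1) ≠ 0 := pow_ne_zero _ hq
  generalize hgE : ((-1:ℂ))^(j+1)*q^((j+1)^2) = E
  generalize hgX : (q:ℂ)^(j+1) = X at hX d1 d2 d4 d5 ⊢
  generalize hgP : qPoch q q (2*j+2) = P at hB ⊢
  rw [show (X + X⁻¹ : ℂ) = (X^2+1)/X from by
        rw [eq_div_iff hX, add_mul, inv_mul_cancel₀ hX]; ring,
      show (q*X + (q*X)⁻¹ : ℂ) = ((q*X)^2+1)/(q*X) from by
        rw [eq_div_iff (mul_ne_zero hq hX), add_mul, inv_mul_cancel₀ (mul_ne_zero hq hX)]; ring]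
  rw [show (q:ℂ)^2*X*((X^2+1)/X) = q^2*(X^2+1) from by
        field_simp]
  simp only [div_mul_eq_mul_div, ← mul_div_assoc, div_div, div_mul_div_comm, ← neg_div]
  have hd5' : q^2*X^2 - 1 ≠ 0 := d5
  have hB1 : X * ((1 - q) * (P * (1 - q * X ^ 2))) ≠ 0 := by
    apply_rules [mul_ne_zero]
  have hB2 : (1 - q ^ 2 * X ^ 2) * (X * (1 * P)) ≠ 0 := by
    apply_rules [mul_ne_zero, one_ne_zero]
  have hB3 : q * X * (1 * (P * (1 - q * X ^ 2) * (1 - q ^ 2 * X ^ 2))) ≠ 0 := by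
    apply_rules [mul_ne_zero, one_ne_zero]
  have hB4 : X * ((1 - q) * (P * (1 - q * X ^ 2))) * ((1 + X ^ 2) * (q ^ 2 * X ^ 2 - 1)) ≠ 0 := by
    apply_rules [mul_ne_zero]
  rw [div_sub_div _ _ hB1 hB2, div_sub_div _ _ hB3 hB4, div_eq_div_iff (mul_ne_zero hB1 hB2) (mul_ne_zero hB3 hB4)]
  ring

lemma case4 (q : ℂ) (j m : ℕ) (hq : q ≠ 0) (hs : ∀ M : ℕ, (1:ℂ) - q * q^M ≠ 0)
    (ha : ∀ M : ℕ, (1:ℂ) + q^(M+1) ≠ 0)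
    (hA : qPoch q q (m+1) ≠ 0) (hB : qPoch q q (2*j+m+3) ≠ 0) :
    myF q (j+m+2+1) (j+1) - q / (1 - q^(2*(j+m+2)+2)) * myF q (j+m+2) (j+1)
      = myG q (j+m+2) (j+1+1) - myG q (j+m+2) (j+1) := by
  have g1 : myG q (j+m+2) (j+1+1)
      = myF q (j+m+2+1) (j+1+1) * myR q (q^(j+m+2)) (q^(j+1+1)) := by
    unfold myG; rw [if_neg (by omega), if_neg (by omega), if_neg (by omega)]
  have g2 : myG q (j+m+2) (j+1) = myF q (j+m+2+1) (j+1) * myR q (q^(j+m+2)) (q^(j+1)) := by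
    unfold myG; rw [if_neg (by omega), if_neg (by omega), if_neg (by omega)]
  rw [g1, g2]
  simp only [myF, myA, myR, if_neg (Nat.succ_ne_zero j), if_neg (Nat.succ_ne_zero (j+1)),
    zpow_neg, zpow_natCast,
    show j+m+2+1 - (j+1) = m+2 from by omega, show j+m+2+1 + (j+1) = 2*j+m+4 from by omega,
    show j+m+2 - (j+1) = m+1 from by omega, show j+m+2 + (j+1) = 2*j+m+3 from by omega,
    show j+m+2+1 - (j+1+1) = m+1 from by omega, show j+m+2+1 + (j+1+1) = 2*j+m+5 from by omega]
  have e1 : qPoch q q (m+2) = qPoch q q (m+1) * (1 - q*q^(m+1)) := qPoch_succ _ _ _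
  have e2 : qPoch q q (2*j+m+4) = qPoch q q (2*j+m+3) * (1 - q*q^(2*j+m+3)) := qPoch_succ _ _ _
  have e3 : qPoch q q (2*j+m+5)
      = qPoch q q (2*j+m+3) * (1 - q*q^(2*j+m+3)) * (1 - q*q^(2*j+m+4)) := by
    rw [show 2*j+m+5 = (2*j+m+4)+1 from rfl, qPoch_succ, e2]
  rw [e1, e2, e3]
  have hX : (q:ℂ)^(j+1) ≠ 0 := pow_ne_zero _ hq
  -- nonzero facts, phrased in the power-atom forms that will appear
  have d1 : (1:ℂ) - q^2*q^m ≠ 0 := by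
    have := hs (m+1); rwa [show (q:ℂ)*q^(m+1) = q^2*q^m from by ring] at this
  have d2 : (1:ℂ) - q^2*(q^(j+1))^2*q^m ≠ 0 := by
    have := hs (2*j+m+3); rwa [show (q:ℂ)*q^(2*j+m+3) = q^2*(q^(j+1))^2*q^m from by ring] at this
  have d3 : (1:ℂ) - q^3*(q^(j+1))^2*q^m ≠ 0 := by
    have := hs (2*j+m+4); rwa [show (q:ℂ)*q^(2*j+m+4) = q^3*(q^(j+1))^2*q^m from by ring] at this
  have d4 : (1:ℂ) - q^4*(q^(j+1))^2*(q^m)^2 ≠ 0 := by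
    have := hs (2*j+2*m+5)
    rwa [show (q:ℂ)*q^(2*j+2*m+5) = q^4*(q^(j+1))^2*(q^m)^2 from by ring] at this
  have d5 : (1:ℂ) + (q^(j+1))^2 ≠ 0 := by
    have := ha (2*j+1); rwa [show q^(2*j+1+1) = (q^(j+1))^2 from by ring] at this
  have d6 : (1:ℂ) + (q*q^(j+1))^2 ≠ 0 := by
    have := ha (2*j+3); rwa [show q^(2*j+3+1) = (q*q^(j+1))^2 from by ring] at this
  have d7 : q^2*(q^(j+1)*q^m*q)^2 - 1 ≠ 0 := by
    have := hs (2*j+2*m+5); intro h; apply this; linear_combination -h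
  -- rewrite powers into atoms X := q^(j+1), W := q^m
  rw [show ((-1:ℂ))^(j+1+1) * q^((j+1+1)^2) = (-1)^(j+1)*q^((j+1)^2) * (-(q*(q^(j+1))^2)) from by ring,
      show (q:ℂ)^(j+1+1) = q*q^(j+1) from by ring,
      show (q:ℂ)^(j+m+2) = q^(j+1)*q^m*q from by ring,
      show (q:ℂ)*q^(m+1) = q^2*q^m from by ring,
      show (q:ℂ)*q^(2*j+m+3) = q^2*(q^(j+1))^2*q^m from by ring,
      show (q:ℂ)*q^(2*j+m+4) = q^3*(q^(j+1))^2*q^m from by ring,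
      show (q:ℂ)^(2*(j+m+2)+2) = q^4*(q^(j+1))^2*(q^m)^2 from by ring]
  generalize hgE : ((-1:ℂ))^(j+1)*q^((j+1)^2) = E
  generalize hgX : (q:ℂ)^(j+1) = X at hX d2 d3 d4 d5 d6 d7 ⊢
  generalize hgW : (q:ℂ)^m = W at d1 d2 d3 d4 d7 ⊢
  generalize hgA : qPoch q q (m+1) = A at hA ⊢
  generalize hgB : qPoch q q (2*j+m+3) = B at hB ⊢
  rw [show (X + X⁻¹ : ℂ) = (X^2+1)/X from by
        rw [eq_div_iff hX, add_mul, inv_mul_cancel₀ hX]; ring,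
      show (q*X + (q*X)⁻¹ : ℂ) = ((q*X)^2+1)/(q*X) from by
        rw [eq_div_iff (mul_ne_zero hq hX), add_mul, inv_mul_cancel₀ (mul_ne_zero hq hX)]; ring]
  rw [show (q:ℂ)^2*(X*W*q)*((X^2+1)/X) = q^3*W*(X^2+1) from by field_simp,
      show (q:ℂ)^2*(X*W*q)*(((q*X)^2+1)/(q*X)) = q^2*W*((q*X)^2+1) from by field_simp]
  simp only [div_mul_eq_mul_div, ← mul_div_assoc, div_div, div_mul_div_comm, ← neg_div]
  have hB1 : X * (A * (1 - q ^ 2 * W) * (B * (1 - q ^ 2 * X ^ 2 * W))) ≠ 0 := by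
    apply_rules [mul_ne_zero]
  have hB2 : (1 - q ^ 4 * X ^ 2 * W ^ 2) * (X * (A * B)) ≠ 0 := by
    apply_rules [mul_ne_zero]
  have hB3 : q * X * (A * (B * (1 - q ^ 2 * X ^ 2 * W) * (1 - q ^ 3 * X ^ 2 * W))) *
      ((1 + (q * X) ^ 2) * (q ^ 2 * (X * W * q) ^ 2 - 1)) ≠ 0 := by
    apply_rules [mul_ne_zero]
  have hB4 : X * (A * (1 - q ^ 2 * W) * (B * (1 - q ^ 2 * X ^ 2 * W))) *
      ((1 + X ^ 2) * (q ^ 2 * (X * W * q) ^ 2 - 1)) ≠ 0 := by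
    apply_rules [mul_ne_zero]
  rw [div_sub_div _ _ hB1 hB2, div_sub_div _ _ hB3 hB4,
    div_eq_div_iff (mul_ne_zero hB1 hB2) (mul_ne_zero hB3 hB4)]
  ring

section main
variable {q : ℂ} (h0 : 0 < ‖q‖) (h1 : ‖q‖ < 1)
include h0 h1

lemma term_eq (n k : ℕ) (hk : k < n + 2) :
    myF q (n+1) k - (if k = n+1 then 0 else q / (1 - q^(2*n+2)) * myF q n k)
      = myG q n (k+1) - myG q n k := by
  have hq' : q ≠ 0 := hq h0 h1
  have hs : ∀ M : ℕ, (1:ℂ) - q * q^M ≠ 0 := fun M => by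
    have := hsub h0 h1 M; rwa [pow_succ'] at this
  have ha' : ∀ M : ℕ, (1:ℂ) + q^(M+1) ≠ 0 := fun M => hadd h0 h1 M
  rcases eq_or_ne k (n+1) with rfl | hkn
  · rw [if_pos rfl, sub_zero]
    have gtop : myG q n (n+1+1) = 0 := by
      unfold myG; rw [if_neg (by omega), if_neg (by omega), if_pos (by omega)]
    have g2 : myG q n (n+1) = -myF q (n+1) (n+1) := by
      unfold myG; rw [if_neg (by omega), if_pos rfl]
    rw [gtop, g2]; ring
  rw [if_neg hkn]
  rcases Nat.eq_zero_or_pos k with rfl | hk1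
  · rcases Nat.eq_zero_or_pos n with rfl | hn1
    · exact case1 q hq' hs
    · exact case2 q n hn1 hq' hs ha' (hP h0 h1 n)
  · rcases eq_or_ne k n with rfl | hkn2
    · obtain ⟨j, rfl⟩ : ∃ j, k = j+1 := ⟨k-1, by omega⟩
      exact case3 q j hq' hs ha' (hP h0 h1 (2*j+2))
    · obtain ⟨j, rfl⟩ : ∃ j, k = j+1 := ⟨k-1, by omega⟩
      obtain ⟨m, rfl⟩ : ∃ m, n = j+m+2 := ⟨n-j-2, by omega⟩
      exact case4 q j m hq' hs ha' (hP h0 h1 (m+1)) (hP h0 h1 (2*j+m+3))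

lemma step (n : ℕ) : myS q (n+1) = q / (1 - q^(2*n+2)) * myS q n := by
  have h2 : q / (1 - q^(2*n+2)) * myS q n
      = ∑ k ∈ Finset.range (n+2), (if k = n+1 then 0 else q / (1 - q^(2*n+2)) * myF q n k) := by
    rw [Finset.sum_range_succ, if_pos rfl, add_zero, myS, Finset.mul_sum]
    refine Finset.sum_congr rfl fun k hk => ?_
    rw [if_neg (by simp at hk; omega)]
  have h3 : myS q (n+1) - q / (1 - q^(2*n+2)) * myS q n = 0 := by
    rw [h2, myS, ← Finset.sum_sub_distrib]
    have h4 : ∀ k ∈ Finset.range (n+2),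
        myF q (n+1) k - (if k = n+1 then 0 else q / (1 - q^(2*n+2)) * myF q n k)
          = myG q n (k+1) - myG q n k := by
      intro k hk
      exact term_eq h0 h1 n k (Finset.mem_range.1 hk)
    rw [Finset.sum_congr rfl h4, Finset.sum_range_sub (myG q n)]
    have g0 : myG q n 0 = 0 := by simp [myG]
    have gtop : myG q n (n+2) = 0 := by
      unfold myG
      rw [if_neg (by omega), if_neg (by omega), if_pos (by omega)]
    rw [g0, gtop, sub_zero]
  exact sub_eq_zero.1 h3

lemma main_id : ∀ n : ℕ, q ^ n / qPoch (q^2) (q^2) n = myS q n := by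
  intro n
  induction n with
  | zero => simp [myS, myF, myA, qPoch_zero]
  | succ n ih =>
    rw [step h0 h1 n, ← ih]
    have hpoch : qPoch (q^2) (q^2) (n+1) = qPoch (q^2) (q^2) n * (1 - q^(2*n+2)) := by
      rw [qPoch_succ]; congr 1; ring
    rw [hpoch]
    have hd : (1 : ℂ) - q^(2*n+2) ≠ 0 := by
      have := hsub h0 h1 (2*n+1); rwa [show 2*n+1+1 = 2*n+2 from rfl] at this
    field_simp [hP2 h0 h1 n]
    ring

end main

theorem stmt13 (q : ℂ) (h0 : 0 < ‖q‖) (h1 : ‖q‖ < 1) :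
    ∀ n : ℕ,
      q ^ n / qPoch (q ^ 2) (q ^ 2) n =
        ∑ i ∈ Finset.range (n + 1),
          (if i = 0 then 1
            else (-1 : ℂ) ^ i * q ^ (i ^ 2) * (q ^ i + q ^ (-(i : ℤ)))) /
            (qPoch q q (n - i) * qPoch q q (n + i)) := by
  exact main_id h0 h1
end

section
/- For every integer l ≥ 0 and every complex q with 0 < |q| < 1, lim_{m→∞} T_w(l,m,a,b,q) = T_AB(l,a,q)/(q;q)_l, where T_w(l,m,a,b,q) = ∑_{n=0, n+l≡a (mod 2)}^{l} q^{n²/2} [m choose n]_q [m+b+(l−a−n)/2 choose m+b]_q [m−b+(l+a−n)/2 choose m−b]_q and T_AB(l,a,q) = ∑_{n=0, n+l≡a (mod 2)}^{l} q^{n²/2} [l choose n]_q [l−n choose (l−a−n)/2]_q. -/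
open scoped BigOperators

/-- q-binomial coefficient `[A choose B]_q`, zero unless `0 ≤ B ≤ A`. -/
noncomputable def qBin (q : ℂ) (A B : ℤ) : ℂ :=
  if 0 ≤ B ∧ B ≤ A then
    qPoch q q A.toNat / (qPoch q q B.toNat * qPoch q q (A - B).toNat)
  else 0

/-- Warnaar's refined q-trinomial coefficient `T_w(l,m,a,b,q)`, where `s` is a
square root of `q` used for `q^(n²/2)`. -/
noncomputable def Tw (q s : ℂ) (l m : ℕ) (a b : ℤ) : ℂ :=
  ∑ n ∈ Finset.range (l + 1),
    if ((n : ℤ) + l - a) % 2 = 0 then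
      s ^ (n ^ 2) * qBin q m n *
        qBin q ((m : ℤ) + b + ((l : ℤ) - a - n) / 2) ((m : ℤ) + b) *
        qBin q ((m : ℤ) - b + ((l : ℤ) + a - n) / 2) ((m : ℤ) - b)
    else 0

/-- Andrews-Baxter q-trinomial coefficient `T(l,a,q)`. -/
noncomputable def TAB (q s : ℂ) (l : ℕ) (a : ℤ) : ℂ :=
  ∑ n ∈ Finset.range (l + 1),
    if ((n : ℤ) + l - a) % 2 = 0 then
      s ^ (n ^ 2) * qBin q l n * qBin q ((l : ℤ) - n) (((l : ℤ) - a - n) / 2)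
    else 0

open Filter

lemma qfac_ne_zero {q : ℂ} (h1 : ‖q‖ < 1) (j : ℕ) : (1:ℂ) - q * q ^ j ≠ 0 := by
  intro h
  have h2 : q * q ^ j = 1 := by linear_combination -h
  have h3 : ‖q * q ^ j‖ < 1 := by
    rw [norm_mul, norm_pow]
    calc ‖q‖ * ‖q‖ ^ j ≤ ‖q‖ * 1 :=
          mul_le_mul_of_nonneg_left (pow_le_one₀ (norm_nonneg q) h1.le)
            (norm_nonneg q)
      _ < 1 := by rwa [mul_one]
  rw [h2] at h3
  simp at h3

lemma qPoch_ne_zero {q : ℂ} (h1 : ‖q‖ < 1) (n : ℕ) : qPoch q q n ≠ 0 := by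
  rw [qPoch]
  exact Finset.prod_ne_zero_iff.mpr fun j _ => qfac_ne_zero h1 j

lemma qPoch_tendsto {q : ℂ} (h1 : ‖q‖ < 1) :
    ∃ P : ℂ, P ≠ 0 ∧ Filter.Tendsto (fun m : ℕ => qPoch q q m) Filter.atTop (nhds P) := by
  have hfn : ∀ (x : Unit) (n : ℕ), (fun n (_ : Unit) => (1:ℂ) - q * q ^ n) n x ≠ 0 :=
    fun _ n => qfac_ne_zero h1 n
  have hsum : ∀ _ : Unit, Summable fun n : ℕ => Complex.log ((1:ℂ) - q * q ^ n) := by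
    intro _
    have hgeo : Summable fun n : ℕ => (3/2 : ℝ) * ‖q‖ ^ (n+1) := by
      have : Summable fun n : ℕ => ‖q‖ ^ n :=
        summable_geometric_of_lt_one (norm_nonneg q) h1
      simpa [pow_succ, mul_comm, mul_assoc, mul_left_comm] using
        (this.mul_left ((3/2 : ℝ) * ‖q‖))
    apply Summable.of_norm_bounded_eventually_nat hgeo
    have hev : ∀ᶠ n : ℕ in atTop, ‖q‖ ^ n < 1/2 :=
      (tendsto_pow_atTop_nhds_zero_of_lt_one (norm_nonneg q) h1).eventually
        (gt_mem_nhds (by norm_num))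
    obtain ⟨N, hN⟩ := eventually_atTop.mp hev
    filter_upwards [eventually_ge_atTop N] with n hn
    have hb : ‖-(q * q ^ n)‖ ≤ 1/2 := by
      rw [norm_neg, norm_mul, norm_pow, ← pow_succ']
      exact (hN (n+1) (by omega)).le
    have := Complex.norm_log_one_add_half_le_self (z := -(q * q ^ n)) (by
      simpa using hb)
    rw [← sub_eq_add_neg] at this
    refine this.trans ?_
    simp only [norm_neg, norm_mul, norm_pow]
    rw [← pow_succ']
  have hprod := Complex.hasProd_of_hasSum_log (f := fun n : ℕ => (1:ℂ) - q * q ^ n)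
    (fun n => hfn () n) (hsum ()).hasSum
  exact ⟨_, Complex.exp_ne_zero _, hprod.tendsto_prod_nat⟩

lemma tendsto_toNat (c : ℤ) :
    Filter.Tendsto (fun m : ℕ => ((m : ℤ) + c).toNat) Filter.atTop Filter.atTop :=
  Filter.tendsto_atTop_atTop.mpr fun N => ⟨N + c.natAbs, fun m hm => by omega⟩

theorem stmt18 (q s : ℂ) (h0 : 0 < ‖q‖) (h1 : ‖q‖ < 1)
    (hs : s ^ 2 = q) (l : ℕ) (a b : ℤ) (ha : a.natAbs ≤ l) :
    Filter.Tendsto (fun m : ℕ => Tw q s l m a b) Filter.atTop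
      (nhds (TAB q s l a / qPoch q q l)) := by
  obtain ⟨P, hPne, htend⟩ := qPoch_tendsto h1
  have hPn : ∀ n : ℕ, qPoch q q n ≠ 0 := qPoch_ne_zero h1
  -- limit of [m choose n]_q
  have B1 : ∀ n : ℕ, Tendsto (fun m : ℕ => qBin q m n) atTop (nhds (1 / qPoch q q n)) := by
    intro n
    have heq : ∀ᶠ m : ℕ in atTop,
        qPoch q q m / (qPoch q q n * qPoch q q (m - n)) = qBin q m n := by
      filter_upwards [eventually_ge_atTop n] with m hm
      rw [qBin, if_pos (by constructor <;> omega)]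
      have e3 : ((m : ℤ) - (n : ℤ)).toNat = m - n := by omega
      rw [e3, Int.toNat_natCast, Int.toNat_natCast]
    refine Tendsto.congr' heq ?_
    have hd : Tendsto (fun m : ℕ => qPoch q q n * qPoch q q (m - n)) atTop
        (nhds (qPoch q q n * P)) :=
      tendsto_const_nhds.mul (htend.comp (tendsto_sub_atTop_nat n))
    have hval : P / (qPoch q q n * P) = 1 / qPoch q q n := by
      rw [mul_comm, ← div_div, div_self hPne]
    rw [← hval]
    exact htend.div hd (mul_ne_zero (hPn n) hPne)
  -- limit of [m + c + k choose m + c]_q for fixed k ≥ 0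
  have B2 : ∀ (c k : ℤ), 0 ≤ k → Tendsto (fun m : ℕ => qBin q ((m : ℤ) + c + k) ((m : ℤ) + c))
      atTop (nhds (1 / qPoch q q k.toNat)) := by
    intro c k hk
    have heq : ∀ᶠ m : ℕ in atTop,
        qPoch q q ((m : ℤ) + c).toNat * qPoch q q k.toNat ≠ 0 →
        True := by exact Filter.Eventually.of_forall fun _ _ => trivial
    clear heq
    have heq : ∀ᶠ m : ℕ in atTop,
        qPoch q q ((m : ℤ) + c + k).toNat /
          (qPoch q q ((m : ℤ) + c).toNat * qPoch q q k.toNat)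
          = qBin q ((m : ℤ) + c + k) ((m : ℤ) + c) := by
      filter_upwards [eventually_ge_atTop c.natAbs] with m hm
      rw [qBin, if_pos (by constructor <;> omega)]
      have e : (m : ℤ) + c + k - ((m : ℤ) + c) = k := by ring
      rw [e]
    refine Tendsto.congr' heq ?_
    have hnum : Tendsto (fun m : ℕ => qPoch q q ((m : ℤ) + c + k).toNat) atTop (nhds P) := by
      refine Tendsto.congr (fun m => ?_) (htend.comp (tendsto_toNat (c + k)))
      simp [add_assoc]
    have hden : Tendsto (fun m : ℕ => qPoch q q ((m : ℤ) + c).toNat * qPoch q q k.toNat) atTop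
        (nhds (P * qPoch q q k.toNat)) :=
      (htend.comp (tendsto_toNat c)).mul_const _
    have hval : P / (P * qPoch q q k.toNat) = 1 / qPoch q q k.toNat := by
      rw [← div_div, div_self hPne]
    rw [← hval]
    exact hnum.div hden (mul_ne_zero hPne (hPn _))
  rw [TAB, Finset.sum_div]
  unfold Tw
  apply tendsto_finset_sum
  intro n hn
  have hnl : n ≤ l := by
    have := Finset.mem_range.mp hn; omega
  by_cases hpar : ((n : ℤ) + l - a) % 2 = 0
  · simp only [if_pos hpar]
    by_cases hk : 0 ≤ ((l : ℤ) - a - n) / 2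
    · by_cases hk' : 0 ≤ ((l : ℤ) + a - n) / 2
      · have B1n := B1 n
        have B2b := B2 b (((l : ℤ) - a - n) / 2) hk
        have B2b' := B2 (-b) (((l : ℤ) + a - n) / 2) hk'
        simp only [← sub_eq_add_neg] at B2b'
        have hT := ((tendsto_const_nhds (x := s ^ n ^ 2)).mul B1n |>.mul B2b).mul B2b'
        have hval : s ^ n ^ 2 * (1 / qPoch q q n) * (1 / qPoch q q (((l : ℤ) - a - n) / 2).toNat)
            * (1 / qPoch q q (((l : ℤ) + a - n) / 2).toNat)
            = s ^ n ^ 2 * qBin q l n * qBin q ((l : ℤ) - n) (((l : ℤ) - a - n) / 2)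
              / qPoch q q l := by
          rw [qBin, if_pos (by constructor <;> omega), qBin, if_pos (by constructor <;> omega)]
          have e1 : ((l : ℤ) - (n : ℤ)).toNat = l - n := by omega
          have e2 : ((l : ℤ) - n - ((l : ℤ) - a - n) / 2).toNat
              = (((l : ℤ) + a - n) / 2).toNat := by omega
          rw [e1, e2, Int.toNat_natCast, Int.toNat_natCast]
          have c1 := hPn n
          have c2 := hPn l
          have c3 := hPn (l - n)
          have c4 := hPn (((l : ℤ) - a - ↑n) / 2).toNat
          have c5 := hPn (((l : ℤ) + a - ↑n) / 2).toNat
          field_simp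
        rw [← hval]
        exact hT
      · have hz : ∀ m : ℕ,
            qBin q ((m : ℤ) - b + ((l : ℤ) + a - n) / 2) ((m : ℤ) - b) = 0 := fun m => by
          rw [qBin, if_neg (by omega)]
        have hzt : qBin q ((l : ℤ) - n) (((l : ℤ) - a - n) / 2) = 0 := by
          rw [qBin, if_neg (by omega)]
        simp only [hz, hzt, mul_zero, zero_mul, zero_div]
        exact tendsto_const_nhds
    · have hz : ∀ m : ℕ,
          qBin q ((m : ℤ) + b + ((l : ℤ) - a - n) / 2) ((m : ℤ) + b) = 0 := fun m => by
        rw [qBin, if_neg (by omega)]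
      have hzt : qBin q ((l : ℤ) - n) (((l : ℤ) - a - n) / 2) = 0 := by
        rw [qBin, if_neg (by omega)]
      simp only [hz, hzt, mul_zero, zero_mul, zero_div]
      exact tendsto_const_nhds
  · simp only [if_neg hpar, zero_div]
    exact tendsto_const_nhds
end
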